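/- arXiv:2309.08076 — 12 statements merged into one kernel-verified Lean document; each statement's English description precedes it below -/
import Mathlib

section
/- The set c_{0,I} of all bounded real sequences that are I-convergent to 0 is a closed subspace of ℓ∞ (the space of bounded real sequences with the sup norm). -/
open BoundedContinuousFunction

/-- The set `c_{0,I}` of bounded real sequences `I`-convergent to `0` is a closed
linear subspace of `ℓ∞` (bounded real sequences with the sup norm). -/
theorem c0I_closed_subspace (I : Set (Set ℕ))
    (hdown : ∀ {A B : Set ℕ}, A ⊆ B → B ∈ I → A ∈ I)
    (hunion : ∀ {A B : Set ℕ}, A ∈ I → B ∈ I → A ∪ B ∈ I)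
    (hfin : ∀ A : Set ℕ, A.Finite → A ∈ I) :
    IsClosed {x : ℕ →ᵇ ℝ | ∀ ε > (0 : ℝ), {n | ε ≤ |x n|} ∈ I} ∧
    (0 : ℕ →ᵇ ℝ) ∈ {x : ℕ →ᵇ ℝ | ∀ ε > (0 : ℝ), {n | ε ≤ |x n|} ∈ I} ∧
    (∀ x y : ℕ →ᵇ ℝ, x ∈ {x : ℕ →ᵇ ℝ | ∀ ε > (0 : ℝ), {n | ε ≤ |x n|} ∈ I} →
      y ∈ {x : ℕ →ᵇ ℝ | ∀ ε > (0 : ℝ), {n | ε ≤ |x n|} ∈ I} →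
      x + y ∈ {x : ℕ →ᵇ ℝ | ∀ ε > (0 : ℝ), {n | ε ≤ |x n|} ∈ I}) ∧
    (∀ (c : ℝ) (x : ℕ →ᵇ ℝ), x ∈ {x : ℕ →ᵇ ℝ | ∀ ε > (0 : ℝ), {n | ε ≤ |x n|} ∈ I} →
      c • x ∈ {x : ℕ →ᵇ ℝ | ∀ ε > (0 : ℝ), {n | ε ≤ |x n|} ∈ I}) := by
  refine ⟨?_, ?_, ?_, ?_⟩
  · refine isClosed_of_closure_subset ?_
    intro x hx ε hε
    obtain ⟨y, hy, hd⟩ := Metric.mem_closure_iff.mp hx (ε / 2) (by linarith)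
    refine hdown (B := {n | ε / 2 ≤ |y n|}) ?_ (hy (ε / 2) (by linarith))
    intro n hn
    have h1 : dist (x n) (y n) < ε / 2 := lt_of_le_of_lt (dist_coe_le_dist n) hd
    have h2 : ε ≤ |x n| := hn
    simp only [Set.mem_setOf_eq]
    have := abs_sub_abs_le_abs_sub (x n) (y n)
    rw [Real.dist_eq] at h1
    linarith
  · intro ε hε
    refine hdown (B := ∅) ?_ (hfin ∅ Set.finite_empty)
    intro n hn
    simp only [Set.mem_setOf_eq, BoundedContinuousFunction.coe_zero, Pi.zero_apply,
      abs_zero] at hn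
    linarith
  · intro x y hx hy ε hε
    refine hdown (B := {n | ε / 2 ≤ |x n|} ∪ {n | ε / 2 ≤ |y n|})
      ?_ (hunion (hx (ε / 2) (by linarith)) (hy (ε / 2) (by linarith)))
    intro n hn
    simp only [Set.mem_setOf_eq, BoundedContinuousFunction.coe_add, Pi.add_apply] at hn
    by_contra h
    simp only [Set.mem_union, Set.mem_setOf_eq, not_or, not_le] at h
    have := abs_add_le (x n) (y n)
    linarith
  · intro c x hx ε hε
    have hc : (0:ℝ) < |c| + 1 := by positivity
    refine hdown (B := {n | ε / (|c| + 1) ≤ |x n|}) ?_ (hx (ε / (|c| + 1)) (by positivity))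
    intro n hn
    simp only [Set.mem_setOf_eq, BoundedContinuousFunction.coe_smul, Pi.smul_apply,
      smul_eq_mul, abs_mul] at hn
    simp only [Set.mem_setOf_eq]
    rw [div_le_iff₀ hc]
    nlinarith [abs_nonneg (x n), abs_nonneg c]
end

section
/- If I is a proper ideal on ℕ, then c_{0,I} is the closed linear span (in the sup norm) of the set of characteristic functions {χ_A : A ∈ I}. -/
open BoundedContinuousFunction

/-- The characteristic function of `A ⊆ ℕ` as an element of `ℓ∞`. -/
noncomputable def chi (A : Set ℕ) : ℕ →ᵇ ℝ :=
  BoundedContinuousFunction.ofNormedAddCommGroup (A.indicator fun _ => (1 : ℝ))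
    continuous_of_discreteTopology 1 (by
      intro n
      by_cases h : n ∈ A <;> simp [Set.indicator, h])

open Classical in
lemma chi_apply (A : Set ℕ) (n : ℕ) : chi A n = if n ∈ A then 1 else 0 := by
  simp [chi, Set.indicator]

/-- If `I` is a proper ideal on `ℕ`, then `c_{0,I}` is the closed linear span (in the sup
norm of `ℓ∞`) of the characteristic functions `χ_A`, `A ∈ I`. -/
theorem c0I_eq_closed_span_chi (I : Set (Set ℕ))
    (hdown : ∀ {A B : Set ℕ}, A ⊆ B → B ∈ I → A ∈ I)
    (hunion : ∀ {A B : Set ℕ}, A ∈ I → B ∈ I → A ∪ B ∈ I)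
    (hfin : ∀ A : Set ℕ, A.Finite → A ∈ I)
    (hproper : Set.univ ∉ I) :
    {x : ℕ →ᵇ ℝ | ∀ ε > (0 : ℝ), {n | ε ≤ |x n|} ∈ I} =
      closure (Submodule.span ℝ {f : ℕ →ᵇ ℝ | ∃ A ∈ I, f = chi A} : Set (ℕ →ᵇ ℝ)) := by
  classical
  have hzero : (∅ : Set ℕ) ∈ I := hfin ∅ Set.finite_empty
  -- The left side as a submodule
  let S : Submodule ℝ (ℕ →ᵇ ℝ) :=
  { carrier := {x : ℕ →ᵇ ℝ | ∀ ε > (0 : ℝ), {n | ε ≤ |x n|} ∈ I}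
    zero_mem' := by
      intro ε hε
      have h : {n : ℕ | ε ≤ |(0 : ℕ →ᵇ ℝ) n|} = ∅ := by
        ext n; simp [not_le, hε]
      rw [h]; exact hzero
    add_mem' := by
      intro x y hx hy ε hε
      refine hdown ?_ (hunion (hx (ε/2) (by positivity)) (hy (ε/2) (by positivity)))
      intro n hn
      simp only [Set.mem_setOf_eq, BoundedContinuousFunction.coe_add, Pi.add_apply] at hn
      by_contra h
      simp only [Set.mem_union, Set.mem_setOf_eq, not_or, not_le] at h
      have := abs_add_le (x n) (y n)
      linarith
    smul_mem' := by
      intro c x hx ε hε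
      by_cases hc : c = 0
      · subst hc
        have h : {n : ℕ | ε ≤ |((0 : ℝ) • x) n|} = ∅ := by
          ext n; simp [not_le, hε]
        rw [h]; exact hzero
      · have hc' : 0 < |c| := abs_pos.mpr hc
        refine hdown ?_ (hx (ε / |c|) (by positivity))
        intro n hn
        simp only [Set.mem_setOf_eq, BoundedContinuousFunction.coe_smul, Pi.smul_apply,
          smul_eq_mul, abs_mul] at hn ⊢
        rw [div_le_iff₀ hc']
        linarith [mul_comm (|c|) (|x n|)] }
  have hSclosed : IsClosed (S : Set (ℕ →ᵇ ℝ)) := by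
    refine isClosed_of_closure_subset ?_
    intro x hx ε hε
    obtain ⟨y, hyS, hxy⟩ := Metric.mem_closure_iff.mp hx (ε/2) (by positivity)
    refine hdown ?_ (hyS (ε/2) (by positivity))
    intro n hn
    simp only [Set.mem_setOf_eq] at hn ⊢
    have h1 : dist (x n) (y n) ≤ dist x y := BoundedContinuousFunction.dist_coe_le_dist n
    have h2 : |x n| ≤ |x n - y n| + |y n| := by
      have := abs_add_le (x n - y n) (y n); simpa using this
    rw [Real.dist_eq] at h1
    linarith
  apply Set.eq_of_subset_of_subset
  · -- c0I ⊆ closure span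
    intro x hx
    rw [Metric.mem_closure_iff]
    intro δ hδ
    set ε : ℝ := δ / 3 with hεdef
    have hε : 0 < ε := by positivity
    have hA : {n : ℕ | ε ≤ |x n|} ∈ I := hx ε hε
    set A : Set ℕ := {n : ℕ | ε ≤ |x n|} with hAdef
    set N : ℤ := ⌈‖x‖ / ε⌉ + 1 with hNdef
    set B : ℤ → Set ℕ := fun k => {n | n ∈ A ∧ ⌊x n / ε⌋ = k} with hBdef
    set g : ℕ →ᵇ ℝ := ∑ k ∈ Finset.Icc (-N) N, ((k : ℝ) * ε) • chi (B k) with hgdef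
    have hgspan : g ∈ Submodule.span ℝ {f : ℕ →ᵇ ℝ | ∃ A ∈ I, f = chi A} := by
      refine Submodule.sum_mem _ (fun k _ => Submodule.smul_mem _ _ ?_)
      exact Submodule.subset_span ⟨B k, hdown (fun n hn => hn.1) hA, rfl⟩
    refine ⟨g, hgspan, ?_⟩
    have hgn : ∀ n, g n = ∑ k ∈ Finset.Icc (-N) N, ((k : ℝ) * ε) * chi (B k) n := by
      intro n
      rw [hgdef]
      simp
    have key : ∀ n, dist (x n) (g n) ≤ ε := by
      intro n
      by_cases hnA : n ∈ A
      · -- n ∈ A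
        set k₀ : ℤ := ⌊x n / ε⌋ with hk₀
        have hxn : |x n| ≤ ‖x‖ := BoundedContinuousFunction.norm_coe_le_norm x n
        have habs := abs_le.mp hxn
        have hk₀mem : k₀ ∈ Finset.Icc (-N) N := by
          rw [Finset.mem_Icc]
          constructor
          · rw [hk₀, Int.le_floor]
            push_cast
            have h1 : ‖x‖ / ε ≤ (⌈‖x‖ / ε⌉ : ℝ) := Int.le_ceil _
            have h2 : -(‖x‖ / ε) ≤ x n / ε := by
              rw [← neg_div]
              exact (div_le_div_iff_of_pos_right hε).mpr habs.1
            rw [hNdef]; push_cast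
            nlinarith
          · have h1 : (k₀ : ℝ) ≤ x n / ε := Int.floor_le _
            have h2 : x n / ε ≤ ‖x‖ / ε := (div_le_div_iff_of_pos_right hε).mpr habs.2
            have h3 : ‖x‖ / ε ≤ (⌈‖x‖ / ε⌉ : ℝ) := Int.le_ceil _
            have : (k₀ : ℝ) ≤ (N : ℝ) := by rw [hNdef]; push_cast; linarith
            exact_mod_cast this
        have hgval : g n = (k₀ : ℝ) * ε := by
          rw [hgn n]
          rw [Finset.sum_eq_single k₀]
          · rw [chi_apply]
            have : n ∈ B k₀ := ⟨hnA, rfl⟩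
            simp [this]
          · intro b _ hb
            rw [chi_apply]
            have : n ∉ B b := fun h => hb (h.2 ▸ rfl)
            simp [this]
          · intro h; exact absurd hk₀mem h
        rw [hgval, Real.dist_eq]
        have h1 : (k₀ : ℝ) ≤ x n / ε := Int.floor_le _
        have h2 : x n / ε < (k₀ : ℝ) + 1 := Int.lt_floor_add_one _
        have h1' : (k₀ : ℝ) * ε ≤ x n := (le_div_iff₀ hε).mp h1
        have h2' : x n < ((k₀ : ℝ) + 1) * ε := (div_lt_iff₀ hε).mp h2
        rw [abs_le]
        constructor <;> nlinarith
      · -- n ∉ A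
        have hgval : g n = 0 := by
          rw [hgn n]
          apply Finset.sum_eq_zero
          intro k _
          rw [chi_apply]
          have : n ∉ B k := fun h => hnA h.1
          simp [this]
        rw [hgval, Real.dist_eq, sub_zero]
        have : ¬ ε ≤ |x n| := hnA
        linarith [not_le.mp this]
    have hd : dist x g ≤ ε := by
      rw [BoundedContinuousFunction.dist_le hε.le]
      exact key
    calc dist x g ≤ ε := hd
      _ < δ := by rw [hεdef]; linarith
  · -- closure span ⊆ c0I
    have hsub : {f : ℕ →ᵇ ℝ | ∃ A ∈ I, f = chi A} ⊆ (S : Set (ℕ →ᵇ ℝ)) := by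
      rintro f ⟨A, hA, rfl⟩ ε hε
      refine hdown ?_ hA
      intro n hn
      simp only [Set.mem_setOf_eq, chi_apply] at hn
      by_contra h
      rw [if_neg h] at hn
      simp at hn
      linarith
    have hspan : (Submodule.span ℝ {f : ℕ →ᵇ ℝ | ∃ A ∈ I, f = chi A} : Set (ℕ →ᵇ ℝ)) ⊆ (S : Set (ℕ →ᵇ ℝ)) :=
      Submodule.span_le.mpr hsub
    exact closure_minimal hspan hSclosed
end

section
/- c_{0,I}(X) equals the closure in ℓ∞(X) of the set of bounded X-valued sequences whose support belongs to I. -/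
open BoundedContinuousFunction

/-- `c_{0,I}(X)` equals the closure in `ℓ∞(X)` of the set of bounded `X`-valued sequences
whose support belongs to `I`. -/
theorem c0I_eq_closure_supported (X : Type*) [NormedAddCommGroup X] [NormedSpace ℝ X]
    [CompleteSpace X]
    (I : Set (Set ℕ))
    (hdown : ∀ {A B : Set ℕ}, A ⊆ B → B ∈ I → A ∈ I)
    (hunion : ∀ {A B : Set ℕ}, A ∈ I → B ∈ I → A ∪ B ∈ I)
    (hfin : ∀ A : Set ℕ, A.Finite → A ∈ I) :
    {x : ℕ →ᵇ X | ∀ ε > (0 : ℝ), {n | ε ≤ ‖x n‖} ∈ I} =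
      closure {y : ℕ →ᵇ X | {n | y n ≠ 0} ∈ I} := by
  ext x
  simp only [Set.mem_setOf_eq]
  constructor
  · intro hx
    rw [Metric.mem_closure_iff]
    intro ε hε
    set f : ℕ → X := fun n => if ε / 2 ≤ ‖x n‖ then x n else 0 with hf
    have hbdd : ∀ n, ‖f n‖ ≤ ‖x‖ := by
      intro n
      simp only [hf]
      split
      · exact x.norm_coe_le_norm n
      · simp [norm_nonneg]
    refine ⟨BoundedContinuousFunction.ofNormedAddCommGroupDiscrete f ‖x‖ hbdd, ?_, ?_⟩
    · apply hdown (B := {n | ε / 2 ≤ ‖x n‖})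
      · intro n hn
        simp only [Set.mem_setOf_eq, coe_ofNormedAddCommGroupDiscrete, hf] at hn ⊢
        by_contra h
        simp [h] at hn
      · exact hx (ε / 2) (by linarith)
    · have : dist x (BoundedContinuousFunction.ofNormedAddCommGroupDiscrete f ‖x‖ hbdd) ≤ ε / 2 := by
        rw [BoundedContinuousFunction.dist_le (by linarith)]
        intro n
        simp only [coe_ofNormedAddCommGroupDiscrete, hf]
        split_ifs with h
        · simp; linarith
        · push_neg at h
          simpa [dist_eq_norm] using h.le
      linarith
  · intro hx ε hε
    obtain ⟨y, hy, hdist⟩ := Metric.mem_closure_iff.mp hx (ε / 2) (by linarith)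
    apply hdown (B := {n | y n ≠ 0}) _ hy
    intro n hn
    simp only [Set.mem_setOf_eq] at hn ⊢
    intro h
    have h1 : dist (x n) (y n) ≤ dist x y := BoundedContinuousFunction.dist_coe_le_dist n
    rw [h, dist_eq_norm, sub_zero] at h1
    linarith [dist_comm x y ▸ hdist]
end

section
/- If h : ℕ → ℕ is an onto Katětov reduction from I to J (h⁻¹(A) ∈ J for all A ∈ I), then T_h(x) = x ∘ h is an injective linear isometry from c_{0,I} into c_{0,J} preserving the lattice operations. -/
open BoundedContinuousFunction

/-- If `h : ℕ → ℕ` is an onto Katětov reduction from `I` to `J` (`h ⁻¹' A ∈ J` for all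
`A ∈ I`), then `T_h x = x ∘ h` is an injective linear isometry from `c_{0,I}` into
`c_{0,J}` preserving the lattice operations. -/
theorem Th_into_lattice_isometry (I J : Set (Set ℕ))
    (hIdown : ∀ {A B : Set ℕ}, A ⊆ B → B ∈ I → A ∈ I)
    (hIunion : ∀ {A B : Set ℕ}, A ∈ I → B ∈ I → A ∪ B ∈ I)
    (hIfin : ∀ A : Set ℕ, A.Finite → A ∈ I)
    (hJdown : ∀ {A B : Set ℕ}, A ⊆ B → B ∈ J → A ∈ J)
    (hJunion : ∀ {A B : Set ℕ}, A ∈ J → B ∈ J → A ∪ B ∈ J)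
    (hJfin : ∀ A : Set ℕ, A.Finite → A ∈ J)
    (h : ℕ → ℕ) (hsurj : Function.Surjective h)
    (hred : ∀ A ∈ I, h ⁻¹' A ∈ J) :
    let T : (ℕ →ᵇ ℝ) → (ℕ →ᵇ ℝ) :=
      fun x => x.compContinuous ⟨h, continuous_of_discreteTopology⟩
    let c0I : Set (ℕ →ᵇ ℝ) := {x | ∀ ε > (0 : ℝ), {n | ε ≤ |x n|} ∈ I}
    let c0J : Set (ℕ →ᵇ ℝ) := {x | ∀ ε > (0 : ℝ), {n | ε ≤ |x n|} ∈ J}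
    (∀ x ∈ c0I, T x ∈ c0J) ∧
    Function.Injective T ∧
    (∀ x y : ℕ →ᵇ ℝ, T (x + y) = T x + T y) ∧
    (∀ (c : ℝ) (x : ℕ →ᵇ ℝ), T (c • x) = c • T x) ∧
    (∀ x : ℕ →ᵇ ℝ, ‖T x‖ = ‖x‖) ∧
    (∀ x y : ℕ →ᵇ ℝ, T (x ⊓ y) = T x ⊓ T y) ∧
    (∀ x y : ℕ →ᵇ ℝ, T (x ⊔ y) = T x ⊔ T y) := by
  intro T c0I c0J
  refine ⟨?_, ?_, ?_, ?_, ?_, ?_, ?_⟩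
  · intro x hx ε hε
    have : {n | ε ≤ |(T x) n|} = h ⁻¹' {n | ε ≤ |x n|} := rfl
    rw [this]
    exact hred _ (hx ε hε)
  · intro x y hxy
    ext n
    obtain ⟨m, rfl⟩ := hsurj n
    exact congrFun (congrArg DFunLike.coe hxy) m
  · intro x y; ext n; rfl
  · intro c x; ext n; rfl
  · intro x
    refine le_antisymm (norm_compContinuous_le _ _) ?_
    refine (norm_le (norm_nonneg _)).2 fun n => ?_
    obtain ⟨m, rfl⟩ := hsurj n
    exact norm_coe_le_norm (T x) m
  · intro x y; ext n; rfl
  · intro x y; ext n; rfl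
end

section
/- If Y is a closed sublattice of ℓ∞ which is an order ideal (x ∈ Y whenever |x| ≤ |y| for some y ∈ Y), then Y = c_{0,I} where I = {A ⊆ ℕ : χ_A ∈ Y} (I is a collection of subsets closed under subsets and finite unions, not necessarily containing all finite sets). -/
open BoundedContinuousFunction

/-! The order ideal `Y` contains `χ_{ε ≤ |x|}` whenever `x ∈ Y`, since `ε⁻¹ • x` dominates it.
Conversely the truncation `x * χ_{ε ≤ |x|}` is dominated by `‖x‖ • χ_{ε ≤ |x|}`, hence lies in `Y`,
and is within `ε` of `x`; closedness of `Y` does the rest. -/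

lemma chi_apply_s10 (A : Set ℕ) (n : ℕ) : chi A n = A.indicator (fun _ => (1 : ℝ)) n := rfl

lemma abs_chi_superlevel_le_abs_inv_smul (x : ℕ →ᵇ ℝ) {ε : ℝ} (hε : 0 < ε) (n : ℕ) :
    |chi {n | ε ≤ |x n|} n| ≤ |(ε⁻¹ • x) n| := by
  rw [chi_apply_s10, BoundedContinuousFunction.smul_apply, smul_eq_mul, abs_mul, abs_inv,
    abs_of_pos hε]
  by_cases h : n ∈ {n | ε ≤ |x n|}
  · rw [Set.indicator_of_mem h, abs_one, ← div_eq_inv_mul, one_le_div hε]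
    exact h
  · rw [Set.indicator_of_notMem h, abs_zero]
    positivity

lemma abs_mul_chi_le_abs_norm_smul_chi (x : ℕ →ᵇ ℝ) (A : Set ℕ) (n : ℕ) :
    |(x * chi A) n| ≤ |(‖x‖ • chi A) n| := by
  rw [BoundedContinuousFunction.mul_apply, BoundedContinuousFunction.smul_apply, smul_eq_mul,
    abs_mul, abs_mul, abs_norm]
  exact mul_le_mul_of_nonneg_right (x.norm_coe_le_norm n) (abs_nonneg _)

lemma dist_mul_chi_superlevel_le (x : ℕ →ᵇ ℝ) {ε : ℝ} (hε : 0 ≤ ε) :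
    dist x (x * chi {n | ε ≤ |x n|}) ≤ ε := by
  rw [dist_eq_norm, norm_le hε]
  intro n
  rw [coe_sub, coe_mul, Pi.sub_apply, Pi.mul_apply, chi_apply_s10, Real.norm_eq_abs]
  by_cases h : n ∈ {n | ε ≤ |x n|}
  · rw [Set.indicator_of_mem h, mul_one, sub_self, abs_zero]
    exact hε
  · rw [Set.indicator_of_notMem h, mul_zero, sub_zero]
    exact (not_le.mp h).le

theorem closed_ideal_eq_c0I_general (Y : Set (ℕ →ᵇ ℝ))
    (hclosed : IsClosed Y)
    (hsmul : ∀ (c : ℝ), ∀ x ∈ Y, c • x ∈ Y)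
    (hsolid : ∀ x : ℕ →ᵇ ℝ, ∀ y ∈ Y, (∀ n, |x n| ≤ |y n|) → x ∈ Y) :
    Y = {x : ℕ →ᵇ ℝ | ∀ ε > (0 : ℝ), {n | ε ≤ |x n|} ∈ {A : Set ℕ | chi A ∈ Y}} := by
  ext x
  constructor
  · intro hx ε hε
    exact hsolid _ _ (hsmul ε⁻¹ x hx) (abs_chi_superlevel_le_abs_inv_smul x hε)
  · intro hx
    rw [← hclosed.closure_eq, Metric.mem_closure_iff]
    intro ε hε
    have hchi : chi {n | ε / 2 ≤ |x n|} ∈ Y := hx (ε / 2) (half_pos hε)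
    refine ⟨_, hsolid _ _ (hsmul ‖x‖ _ hchi) (abs_mul_chi_le_abs_norm_smul_chi x _), ?_⟩
    exact (dist_mul_chi_superlevel_le x (half_pos hε).le).trans_lt (half_lt_self hε)

/-- If `Y` is a closed sublattice of `ℓ∞` which is an order ideal, then `Y = c_{0,I}`
where `I = {A ⊆ ℕ : χ_A ∈ Y}`. -/
theorem closed_ideal_eq_c0I (Y : Set (ℕ →ᵇ ℝ))
    (hclosed : IsClosed Y)
    (hzero : (0 : ℕ →ᵇ ℝ) ∈ Y)
    (hadd : ∀ x ∈ Y, ∀ y ∈ Y, x + y ∈ Y)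
    (hsmul : ∀ (c : ℝ), ∀ x ∈ Y, c • x ∈ Y)
    (hsup : ∀ x ∈ Y, ∀ y ∈ Y, x ⊔ y ∈ Y)
    (hinf : ∀ x ∈ Y, ∀ y ∈ Y, x ⊓ y ∈ Y)
    (hsolid : ∀ x : ℕ →ᵇ ℝ, ∀ y ∈ Y, (∀ n, |x n| ≤ |y n|) → x ∈ Y) :
    Y = {x : ℕ →ᵇ ℝ | ∀ ε > (0 : ℝ), {n | ε ≤ |x n|} ∈ {A : Set ℕ | chi A ∈ Y}} :=
  closed_ideal_eq_c0I_general Y hclosed hsmul hsolid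
end

section
/- c_{0,I} and c_{0,J} are c_0-disjoint (i.e., |x| ∧ |y| ∈ c_0 for all x ∈ c_{0,I} and y ∈ c_{0,J}) if and only if I ⊆ J^⊥. -/
/-!
`min |x n| |y n| → 0` says exactly that, for every `ε > 0`, the level sets `{ε ≤ |x|}` and
`{ε ≤ |y|}` meet in a finite set. Level sets of elements of `c_{0,I}` lie in `I`, which gives
one direction; conversely, the indicator of a set in `I` lies in `c_{0,I}` and its level set at
`1` is the set itself.
-/

open BoundedContinuousFunction Filter Topology

theorem tendsto_min_abs_cofinite_nhds_zero_iff {α : Type*} {x y : α → ℝ} :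
    Tendsto (fun n => min |x n| |y n|) cofinite (𝓝 0) ↔
      ∀ ε > 0, ({n | ε ≤ |x n|} ∩ {n | ε ≤ |y n|}).Finite := by
  have hmin : ∀ n, |(min |x n| |y n|)| = min |x n| |y n| := fun n =>
    abs_of_nonneg (le_min (abs_nonneg _) (abs_nonneg _))
  simp only [NormedAddGroup.tendsto_nhds_zero, eventually_cofinite, Real.norm_eq_abs, hmin,
    not_lt, le_min_iff]
  rfl

namespace BoundedContinuousFunction

variable {α : Type*} [TopologicalSpace α] (s : Set α) (hs : IsClopen s)

theorem setOf_one_le_abs_indicator : {a | 1 ≤ |indicator s hs a|} = s := by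
  ext a
  by_cases ha : a ∈ s <;> simp [ha]

theorem setOf_le_abs_indicator_subset {ε : ℝ} (hε : 0 < ε) :
    {a | ε ≤ |indicator s hs a|} ⊆ s := by
  intro a ha
  by_contra h
  simp only [Set.mem_ofPred_eq, indicator_apply, Set.indicator_of_notMem h, abs_zero] at ha
  linarith

end BoundedContinuousFunction

theorem c0_disjoint_iff_orthogonal_general (I J : Set (Set ℕ))
    (hIdown : ∀ {A B : Set ℕ}, A ⊆ B → B ∈ I → A ∈ I)
    (hJdown : ∀ {A B : Set ℕ}, A ⊆ B → B ∈ J → A ∈ J) :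
    (∀ x : ℕ →ᵇ ℝ, (∀ ε > (0 : ℝ), {n | ε ≤ |x n|} ∈ I) →
      ∀ y : ℕ →ᵇ ℝ, (∀ ε > (0 : ℝ), {n | ε ≤ |y n|} ∈ J) →
        Tendsto (fun n => min |x n| |y n|) atTop (𝓝 0)) ↔
    I ⊆ {B : Set ℕ | ∀ A ∈ J, (A ∩ B).Finite} := by
  simp only [← Nat.cofinite_eq_atTop, tendsto_min_abs_cofinite_nhds_zero_iff]
  constructor
  · intro h B hB A hA
    have hB' : IsClopen B := isClopen_discrete B
    have hA' : IsClopen A := isClopen_discrete A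
    have hBA := h (indicator B hB')
      (fun _ hε => hIdown (setOf_le_abs_indicator_subset B hB' hε) hB)
      (indicator A hA') (fun _ hε => hJdown (setOf_le_abs_indicator_subset A hA' hε) hA) 1 one_pos
    rwa [setOf_one_le_abs_indicator, setOf_one_le_abs_indicator, Set.inter_comm] at hBA
  · intro h x hx y hy ε hε
    rw [Set.inter_comm]
    exact h (hx ε hε) _ (hy ε hε)

/-- `c_{0,I}` and `c_{0,J}` are `c_0`-disjoint (`|x| ∧ |y| ∈ c_0` for all `x ∈ c_{0,I}`,
`y ∈ c_{0,J}`) if and only if `I ⊆ J^⊥`. -/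
theorem c0_disjoint_iff_orthogonal (I J : Set (Set ℕ))
    (hIdown : ∀ {A B : Set ℕ}, A ⊆ B → B ∈ I → A ∈ I)
    (hIunion : ∀ {A B : Set ℕ}, A ∈ I → B ∈ I → A ∪ B ∈ I)
    (hIfin : ∀ A : Set ℕ, A.Finite → A ∈ I)
    (hJdown : ∀ {A B : Set ℕ}, A ⊆ B → B ∈ J → A ∈ J)
    (hJunion : ∀ {A B : Set ℕ}, A ∈ J → B ∈ J → A ∪ B ∈ J)
    (hJfin : ∀ A : Set ℕ, A.Finite → A ∈ J) :
    (∀ x : ℕ →ᵇ ℝ, (∀ ε > (0 : ℝ), {n | ε ≤ |x n|} ∈ I) →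
      ∀ y : ℕ →ᵇ ℝ, (∀ ε > (0 : ℝ), {n | ε ≤ |y n|} ∈ J) →
        Tendsto (fun n => min |x n| |y n|) atTop (𝓝 0)) ↔
    I ⊆ {B : Set ℕ | ∀ A ∈ J, (A ∩ B).Finite} :=
  c0_disjoint_iff_orthogonal_general I J hIdown hJdown
end

section
/- The c_0-disjoint complement of c_{0,I} in ℓ∞ equals c_{0,I^⊥}; that is, {x ∈ ℓ∞ : |x| ∧ |y| ∈ c_0 for all y ∈ c_{0,I}} = c_{0,I^⊥}. -/
open BoundedContinuousFunction Filter Topology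

/-! Both sides are described by superlevel sets `{n | ε ≤ |x n|}`: a sequence tends to `0` iff all
its superlevel sets are finite, and the superlevel sets of `|x| ∧ |y|` are the intersections of
those of `x` and `y`. Then `⊇` is immediate, and for `⊆` one tests `x` against the indicator of an
arbitrary `A ∈ I`, which lies in `c_{0,I}` because `I` is closed under subsets. -/

theorem tendsto_cofinite_zero_iff_finite_setOf_le_norm {α E : Type*} [SeminormedAddCommGroup E]
    {f : α → E} : Tendsto f cofinite (𝓝 0) ↔ ∀ ε > 0, {a | ε ≤ ‖f a‖}.Finite := by
  simp only [NormedAddGroup.tendsto_nhds_zero, eventually_cofinite, not_lt]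

theorem setOf_le_abs_min_abs (x y : ℕ → ℝ) (ε : ℝ) :
    {n | ε ≤ |(min |x n| |y n|)|} = {n | ε ≤ |x n|} ∩ {n | ε ≤ |y n|} := by
  ext n
  simp only [abs_of_nonneg (le_min (abs_nonneg (x n)) (abs_nonneg (y n))), le_min_iff,
    Set.mem_ofPred_eq, Set.mem_inter_iff]

theorem tendsto_min_abs_iff_finite_inter (x y : ℕ → ℝ) :
    Tendsto (fun n => min |x n| |y n|) atTop (𝓝 0) ↔
      ∀ ε > 0, ({n | ε ≤ |x n|} ∩ {n | ε ≤ |y n|}).Finite := by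
  simp only [← Nat.cofinite_eq_atTop, tendsto_cofinite_zero_iff_finite_setOf_le_norm,
    Real.norm_eq_abs, setOf_le_abs_min_abs]

noncomputable def indicatorBCF (A : Set ℕ) : ℕ →ᵇ ℝ :=
  ofNormedAddCommGroupDiscrete (A.indicator 1) 1 fun n =>
    (norm_indicator_le_norm_self 1 n).trans norm_one.le

@[simp]
theorem indicatorBCF_apply (A : Set ℕ) (n : ℕ) : indicatorBCF A n = A.indicator 1 n := rfl

theorem setOf_le_abs_indicatorBCF_subset (A : Set ℕ) {δ : ℝ} (hδ : 0 < δ) :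
    {n | δ ≤ |indicatorBCF A n|} ⊆ A := fun n hn => by
  by_contra hnA
  simp only [Set.mem_ofPred_eq, indicatorBCF_apply, Set.indicator_of_notMem hnA, abs_zero] at hn
  linarith

theorem subset_setOf_one_le_abs_indicatorBCF (A : Set ℕ) :
    A ⊆ {n | 1 ≤ |indicatorBCF A n|} := fun n hn => by
  simp [Set.indicator_of_mem hn]

theorem c0_disjoint_complement_eq_general (I : Set (Set ℕ))
    (hdown : ∀ {A B : Set ℕ}, A ⊆ B → B ∈ I → A ∈ I) :
    {x : ℕ →ᵇ ℝ | ∀ y : ℕ →ᵇ ℝ, (∀ ε > (0 : ℝ), {n | ε ≤ |y n|} ∈ I) →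
        Tendsto (fun n => min |x n| |y n|) atTop (𝓝 0)} =
      {x : ℕ →ᵇ ℝ | ∀ ε > (0 : ℝ),
        {n | ε ≤ |x n|} ∈ {B : Set ℕ | ∀ A ∈ I, (A ∩ B).Finite}} := by
  ext x
  simp only [Set.mem_ofPred_eq, tendsto_min_abs_iff_finite_inter]
  constructor
  · intro hx ε hε A hA
    have hδ : 0 < min ε 1 := lt_min hε one_pos
    have hyI : ∀ δ > (0 : ℝ), {n | δ ≤ |indicatorBCF A n|} ∈ I := fun δ hδ =>
      hdown (setOf_le_abs_indicatorBCF_subset A hδ) hA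
    refine (hx _ hyI _ hδ).subset fun n hn => ⟨?_, ?_⟩
    · exact (min_le_left ε 1).trans hn.2
    · exact (min_le_right ε 1).trans (subset_setOf_one_le_abs_indicatorBCF A hn.1)
  · intro hx y hy ε hε
    simpa only [Set.inter_comm] using hx ε hε _ (hy ε hε)

/-- The `c_0`-disjoint complement of `c_{0,I}` in `ℓ∞` equals `c_{0,I^⊥}`. -/
theorem c0_disjoint_complement_eq (I : Set (Set ℕ))
    (hdown : ∀ {A B : Set ℕ}, A ⊆ B → B ∈ I → A ∈ I)
    (hunion : ∀ {A B : Set ℕ}, A ∈ I → B ∈ I → A ∪ B ∈ I)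
    (hfin : ∀ A : Set ℕ, A.Finite → A ∈ I) :
    {x : ℕ →ᵇ ℝ | ∀ y : ℕ →ᵇ ℝ, (∀ ε > (0 : ℝ), {n | ε ≤ |y n|} ∈ I) →
        Tendsto (fun n => min |x n| |y n|) atTop (𝓝 0)} =
      {x : ℕ →ᵇ ℝ | ∀ ε > (0 : ℝ),
        {n | ε ≤ |x n|} ∈ {B : Set ℕ | ∀ A ∈ I, (A ∩ B).Finite}} :=
  c0_disjoint_complement_eq_general I hdown
end

section
/- An ideal I on ℕ is tall (every infinite subset of ℕ contains an infinite member of I) if and only if c_{0,I^⊥} = c_0. -/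
open BoundedContinuousFunction Filter Topology

/-- An ideal `I` on `ℕ` is tall iff `c_{0,I^⊥} = c_0`. -/
theorem tall_iff_c0Iperp_eq_c0 (I : Set (Set ℕ))
    (hdown : ∀ {A B : Set ℕ}, A ⊆ B → B ∈ I → A ∈ I)
    (hunion : ∀ {A B : Set ℕ}, A ∈ I → B ∈ I → A ∪ B ∈ I)
    (hfin : ∀ A : Set ℕ, A.Finite → A ∈ I) :
    (∀ A : Set ℕ, A.Infinite → ∃ B ⊆ A, B.Infinite ∧ B ∈ I) ↔
    {x : ℕ →ᵇ ℝ | ∀ ε > (0 : ℝ),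
        {n | ε ≤ |x n|} ∈ {B : Set ℕ | ∀ A ∈ I, (A ∩ B).Finite}} =
      {x : ℕ →ᵇ ℝ | Tendsto (fun n => x n) atTop (𝓝 0)} := by
  have key : ∀ x : ℕ →ᵇ ℝ, Tendsto (fun n => x n) atTop (𝓝 0) ↔
      ∀ ε > (0:ℝ), {n | ε ≤ |x n|}.Finite := by
    intro x
    rw [← Nat.cofinite_eq_atTop, Metric.tendsto_nhds]
    constructor
    · intro h ε hε
      have := h ε hε
      rw [eventually_cofinite] at this
      exact this.subset (fun n hn => by simpa [Real.dist_eq, not_lt] using hn)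
    · intro h ε hε
      rw [eventually_cofinite]
      exact (h ε hε).subset (fun n hn => by simpa [Real.dist_eq, not_lt] using hn)
  constructor
  · intro tall
    ext x
    simp only [Set.mem_setOf_eq]
    rw [key x]
    constructor
    · intro hx ε hε
      by_contra hinf
      rw [← Set.not_infinite, not_not] at hinf
      obtain ⟨B, hBsub, hBinf, hBI⟩ := tall _ hinf
      have := hx ε hε B hBI
      exact hBinf (this.subset fun n hn => ⟨hn, hBsub hn⟩)
    · intro hx ε hε A _
      exact (hx ε hε).inter_of_right A
  · intro heq A hA
    by_contra hno
    push_neg at hno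
    set f : ℕ →ᵇ ℝ := ⟨⟨A.indicator 1, continuous_of_discreteTopology⟩, 2, by
      intro a b
      have h1 : ∀ n, A.indicator (1 : ℕ → ℝ) n = 0 ∨ A.indicator (1 : ℕ → ℝ) n = 1 := by
        intro n; by_cases h : n ∈ A <;> simp [Set.indicator, h]
      rcases h1 a with ha | ha <;> rcases h1 b with hb | hb <;>
        simp only [ContinuousMap.coe_mk, Real.dist_eq, ha, hb] <;>
        norm_num [ha, hb]⟩ with hf
    have hfval : ∀ n, f n = A.indicator 1 n := fun n => rfl
    have hfmem : f ∈ {x : ℕ →ᵇ ℝ | ∀ ε > (0 : ℝ),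
        {n | ε ≤ |x n|} ∈ {B : Set ℕ | ∀ A ∈ I, (A ∩ B).Finite}} := by
      intro ε hε C hC
      by_contra hinf
      rw [← Set.not_infinite, not_not] at hinf
      have hsub : C ∩ {n | ε ≤ |f n|} ⊆ A := by
        intro n hn
        by_contra hnA
        have h0 : f n = 0 := by simp [hfval, Set.indicator, hnA]
        have := hn.2
        rw [Set.mem_setOf_eq, h0, abs_zero] at this
        linarith
      exact hno _ hsub hinf (hdown (Set.inter_subset_left) hC)
    rw [heq] at hfmem
    rw [Set.mem_setOf_eq, key f] at hfmem
    have := hfmem 1 one_pos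
    refine hA (this.subset fun n hn => ?_)
    simp [Set.mem_setOf_eq, hfval, Set.indicator, hn]
end

section
/- An ideal I on ℕ is tall if and only if for every x ∈ ℓ∞ \ c_0 there exists y ∈ c_{0,I} \ c_0 with 0 < |y| ≤ |x| pointwise. -/
/-!
If `x` does not tend to `0`, then `ε ≤ |x n|` on an infinite set `A`; tallness gives an infinite
`B ⊆ A` in `I`, and `y = 1_B · x` works because each of its level sets `{ε' ≤ |y n|}` lies in `B`.
Conversely, apply the density property to `1_A` for an infinite `A`: the resulting `y` has an
infinite level set `{ε ≤ |y n|}`, which is in `I` and, since `|y| ≤ 1_A`, contained in `A`.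
-/

open BoundedContinuousFunction Filter Topology

theorem not_tendsto_nhds_zero_iff_infinite {E : Type*} [SeminormedAddGroup E] {f : ℕ → E} :
    ¬Tendsto f atTop (𝓝 0) ↔ ∃ ε > 0, {n | ε ≤ ‖f n‖}.Infinite := by
  simp only [NormedAddGroup.tendsto_nhds_zero, not_forall, not_eventually, not_lt,
    Nat.frequently_atTop_iff_infinite, exists_prop]

theorem setOf_le_norm_subset {α E : Type*} [SeminormedAddGroup E] {s : Set α} {g : α → E}
    (hg : ∀ a ∉ s, g a = 0) {ε : ℝ} (hε : 0 < ε) : {a | ε ≤ ‖g a‖} ⊆ s := by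
  intro a ha
  by_contra has
  exact (hε.trans_le ha).ne' (by rw [hg a has, norm_zero])

namespace BoundedContinuousFunction

variable {α β : Type*} [TopologicalSpace α] [DiscreteTopology α] [SeminormedAddCommGroup β]

noncomputable def indicatorOfDiscrete (s : Set α) (f : α →ᵇ β) : α →ᵇ β :=
  ofNormedAddCommGroupDiscrete (s.indicator f) ‖f‖ fun a =>
    (norm_indicator_le_norm_self f a).trans (f.norm_coe_le_norm a)

@[simp]
theorem coe_indicatorOfDiscrete (s : Set α) (f : α →ᵇ β) :
    ⇑(indicatorOfDiscrete s f) = s.indicator f :=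
  rfl

end BoundedContinuousFunction

theorem tall_iff_order_dense_general (I : Set (Set ℕ))
    (hdown : ∀ {A B : Set ℕ}, A ⊆ B → B ∈ I → A ∈ I) :
    (∀ A : Set ℕ, A.Infinite → ∃ B ⊆ A, B.Infinite ∧ B ∈ I) ↔
    (∀ x : ℕ →ᵇ ℝ, ¬ Tendsto (fun n => x n) atTop (𝓝 0) →
      ∃ y : ℕ →ᵇ ℝ, (∀ ε > (0 : ℝ), {n | ε ≤ |y n|} ∈ I) ∧
        ¬ Tendsto (fun n => y n) atTop (𝓝 0) ∧ y ≠ 0 ∧ ∀ n, |y n| ≤ |x n|) := by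
  constructor
  · intro htall x hx
    obtain ⟨ε, hε, hA⟩ := not_tendsto_nhds_zero_iff_infinite.1 hx
    obtain ⟨B, hBA, hB, hBI⟩ := htall _ hA
    have hy : ¬Tendsto (fun n => indicatorOfDiscrete B x n) atTop (𝓝 0) :=
      not_tendsto_nhds_zero_iff_infinite.2
        ⟨ε, hε, hB.mono fun n hn => by simpa [hn] using hBA hn⟩
    refine ⟨indicatorOfDiscrete B x, fun ε' hε' => ?_, hy, fun h0 => hy (by simp [h0]),
      fun n => norm_indicator_le_norm_self x n⟩
    exact hdown (setOf_le_norm_subset (fun n hn => Set.indicator_of_notMem hn x) hε') hBI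
  · intro hdense A hA
    obtain ⟨y, hyI, hy, -, hyx⟩ := hdense (indicatorOfDiscrete A 1)
      (not_tendsto_nhds_zero_iff_infinite.2 ⟨1, one_pos, hA.mono fun n hn => by simp [hn]⟩)
    obtain ⟨ε, hε, hinf⟩ := not_tendsto_nhds_zero_iff_infinite.1 hy
    refine ⟨_, setOf_le_norm_subset (fun n hn => ?_) hε, hinf, hyI ε hε⟩
    simpa [hn] using hyx n

/-- An ideal `I` on `ℕ` is tall iff for every `x ∈ ℓ∞ \ c_0` there is
`y ∈ c_{0,I} \ c_0` with `0 < |y| ≤ |x|` pointwise. -/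
theorem tall_iff_order_dense (I : Set (Set ℕ))
    (hdown : ∀ {A B : Set ℕ}, A ⊆ B → B ∈ I → A ∈ I)
    (hunion : ∀ {A B : Set ℕ}, A ∈ I → B ∈ I → A ∪ B ∈ I)
    (hfin : ∀ A : Set ℕ, A.Finite → A ∈ I) :
    (∀ A : Set ℕ, A.Infinite → ∃ B ⊆ A, B.Infinite ∧ B ∈ I) ↔
    (∀ x : ℕ →ᵇ ℝ, ¬ Tendsto (fun n => x n) atTop (𝓝 0) →
      ∃ y : ℕ →ᵇ ℝ, (∀ ε > (0 : ℝ), {n | ε ≤ |y n|} ∈ I) ∧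
        ¬ Tendsto (fun n => y n) atTop (𝓝 0) ∧ y ≠ 0 ∧ ∀ n, |y n| ≤ |x n|) :=
  tall_iff_order_dense_general I hdown
end

section
/- For ideals I and J on ℕ and a Banach space X, c_{0, I⊔J}(X) = c_{0,I}(X) + c_{0,J}(X), where I⊔J = {A ∪ B : A ∈ I, B ∈ J}. -/
open BoundedContinuousFunction

/-- For ideals `I`, `J` on `ℕ` and a Banach space `X`,
`c_{0,I⊔J}(X) = c_{0,I}(X) + c_{0,J}(X)` where `I⊔J = {A ∪ B : A ∈ I, B ∈ J}`. -/
theorem c0_sqcup_eq_sum (X : Type*) [NormedAddCommGroup X] [NormedSpace ℝ X]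
    [CompleteSpace X]
    (I J : Set (Set ℕ))
    (hIdown : ∀ {A B : Set ℕ}, A ⊆ B → B ∈ I → A ∈ I)
    (hIunion : ∀ {A B : Set ℕ}, A ∈ I → B ∈ I → A ∪ B ∈ I)
    (hIfin : ∀ A : Set ℕ, A.Finite → A ∈ I)
    (hJdown : ∀ {A B : Set ℕ}, A ⊆ B → B ∈ J → A ∈ J)
    (hJunion : ∀ {A B : Set ℕ}, A ∈ J → B ∈ J → A ∪ B ∈ J)
    (hJfin : ∀ A : Set ℕ, A.Finite → A ∈ J) :
    {z : ℕ →ᵇ X | ∀ ε > (0 : ℝ),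
        {n | ε ≤ ‖z n‖} ∈ {C : Set ℕ | ∃ A ∈ I, ∃ B ∈ J, C = A ∪ B}} =
      {z : ℕ →ᵇ X | ∃ x : ℕ →ᵇ X, (∀ ε > (0 : ℝ), {n | ε ≤ ‖x n‖} ∈ I) ∧
        ∃ y : ℕ →ᵇ X, (∀ ε > (0 : ℝ), {n | ε ≤ ‖y n‖} ∈ J) ∧ z = x + y} := by
  classical
  have hbi : ∀ (K : Set (Set ℕ)), (∀ {A B : Set ℕ}, A ∈ K → B ∈ K → A ∪ B ∈ K) →
      ∀ (C : ℕ → Set ℕ), (∀ j, C j ∈ K) → ∀ k, (⋃ j ≤ k, C j) ∈ K := by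
    intro K hK C hC k
    induction k with
    | zero => simpa using hC 0
    | succ k ih =>
      rw [Set.biUnion_le_succ]
      exact hK ih (hC _)
  ext z
  simp only [Set.mem_setOf_eq]
  constructor
  · intro hz
    have hA : ∀ k : ℕ, ∃ A ∈ I, ∃ B ∈ J, {n | (1:ℝ)/(k+1) ≤ ‖z n‖} = A ∪ B := by
      intro k; exact hz _ (by positivity)
    choose A hAI B hBJ hAB using hA
    set p : ℕ → ℕ → Prop := fun n k => (1:ℝ)/(k+1) ≤ ‖z n‖ with hp
    let f : ℕ → X := fun n =>
      if h : ∃ k, p n k then (if n ∈ A (Nat.find h) then z n else 0) else 0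
    have hfb : ∀ n, ‖f n‖ ≤ ‖z‖ := by
      intro n
      by_cases h : ∃ k, p n k
      · simp only [f, dif_pos h]
        split
        · exact z.norm_coe_le_norm n
        · simp [norm_nonneg]
      · simp [f, dif_neg h, norm_nonneg]
    let x : ℕ →ᵇ X := BoundedContinuousFunction.ofNormedAddCommGroup f
      continuous_of_discreteTopology ‖z‖ hfb
    have hx : ∀ n, x n = f n := fun n => rfl
    refine ⟨x, ?_, z - x, ?_, by abel⟩
    · intro ε hε
      obtain ⟨K, hK⟩ := exists_nat_one_div_lt hε
      refine hIdown ?_ (hbi I hIunion A hAI K)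
      intro n hn
      simp only [Set.mem_setOf_eq] at hn
      rw [hx] at hn
      have hne : f n ≠ 0 := by
        intro h0; rw [h0, norm_zero] at hn; linarith
      by_cases h : ∃ k, p n k
      · by_cases hmem : n ∈ A (Nat.find h)
        · have hfz : f n = z n := by simp [f, dif_pos h, hmem]
          rw [hfz] at hn
          have hk : Nat.find h ≤ K := Nat.find_le (by
            show (1:ℝ)/(K+1) ≤ ‖z n‖
            push_cast
            linarith)
          exact Set.mem_biUnion hk hmem
        · have : f n = 0 := by simp [f, dif_pos h, hmem]
          exact absurd this hne
      · have : f n = 0 := by simp [f, dif_neg h]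
        exact absurd this hne
    · intro ε hε
      obtain ⟨K, hK⟩ := exists_nat_one_div_lt hε
      refine hJdown ?_ (hbi J hJunion B hBJ K)
      intro n hn
      simp only [Set.mem_setOf_eq] at hn
      have hsub : (z - x) n = z n - f n := by
        rw [BoundedContinuousFunction.sub_apply, hx]
      rw [hsub] at hn
      by_cases h : ∃ k, p n k
      · by_cases hmem : n ∈ A (Nat.find h)
        · have hfz : f n = z n := by simp [f, dif_pos h, hmem]
          rw [hfz, sub_self, norm_zero] at hn; linarith
        · have hf0 : f n = 0 := by simp [f, dif_pos h, hmem]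
          rw [hf0, sub_zero] at hn
          have hk : Nat.find h ≤ K := Nat.find_le (by
            show (1:ℝ)/(K+1) ≤ ‖z n‖
            push_cast
            linarith)
          have hnS : n ∈ A (Nat.find h) ∪ B (Nat.find h) := by
            rw [← hAB]
            exact Nat.find_spec h
          rcases hnS with h' | h'
          · exact absurd h' hmem
          · exact Set.mem_biUnion hk h'
      · have hf0 : f n = 0 := by simp [f, dif_neg h]
        rw [hf0, sub_zero] at hn
        exact absurd ⟨K, by show (1:ℝ)/(K+1) ≤ ‖z n‖; push_cast; linarith⟩ h
  · rintro ⟨x, hxI, y, hyJ, rfl⟩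
    intro ε hε
    refine ⟨{n | ε ≤ ‖(x+y) n‖} ∩ {n | ε/2 ≤ ‖x n‖},
      hIdown Set.inter_subset_right (hxI (ε/2) (by linarith)),
      {n | ε ≤ ‖(x+y) n‖} \ {n | ε/2 ≤ ‖x n‖},
      hJdown ?_ (hyJ (ε/2) (by linarith)), (Set.inter_union_diff _ _).symm⟩
    rintro n ⟨hn1, hn2⟩
    simp only [Set.mem_setOf_eq] at hn1 hn2 ⊢
    push_neg at hn2
    have htri : ‖(x+y) n‖ ≤ ‖x n‖ + ‖y n‖ := by
      rw [BoundedContinuousFunction.add_apply]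
      exact norm_add_le _ _
    linarith
end

section
/- For a Banach space X and an ideal I on ℕ, the quotient norm of a bounded sequence x = (x_n) in ℓ∞(X)/c_{0,I}(X) equals I-limsup ‖x_n‖, i.e., inf{‖x - z‖∞ : z ∈ c_{0,I}(X)} = I-limsup_n ‖x_n‖. -/
open BoundedContinuousFunction

/-- For a Banach space `X` and an ideal `I` on `ℕ`, the quotient norm of a bounded
sequence `x` in `ℓ∞(X)/c_{0,I}(X)` equals `I`-limsup of `‖x n‖`:
`inf {‖x - z‖ : z ∈ c_{0,I}(X)} = sup {b : {k : ‖x k‖ > b} ∉ I}`. -/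
theorem quotient_norm_eq_I_limsup (X : Type*) [NormedAddCommGroup X] [NormedSpace ℝ X]
    [CompleteSpace X]
    (I : Set (Set ℕ))
    (hdown : ∀ {A B : Set ℕ}, A ⊆ B → B ∈ I → A ∈ I)
    (hunion : ∀ {A B : Set ℕ}, A ∈ I → B ∈ I → A ∪ B ∈ I)
    (hfin : ∀ A : Set ℕ, A.Finite → A ∈ I)
    (x : ℕ →ᵇ X) :
    sInf ((fun z => ‖x - z‖) '' {z : ℕ →ᵇ X | ∀ ε > (0 : ℝ), {n | ε ≤ ‖z n‖} ∈ I}) =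
      sSup {b : ℝ | {k | b < ‖x k‖} ∉ I} := by
  set S : Set ℝ := {b : ℝ | {k | b < ‖x k‖} ∉ I} with hSdef
  set Z : Set (ℕ →ᵇ X) := {z : ℕ →ᵇ X | ∀ ε > (0 : ℝ), {n | ε ≤ ‖z n‖} ∈ I} with hZdef
  have hempty : (∅ : Set ℕ) ∈ I := hfin ∅ Set.finite_empty
  have hSbdd : BddAbove S := by
    refine ⟨‖x‖, fun b hb => ?_⟩
    by_contra hlt
    push_neg at hlt
    apply hb
    have he : {k | b < ‖x k‖} = ∅ := by
      ext k
      simp only [Set.mem_setOf_eq, Set.mem_empty_iff_false, iff_false, not_lt]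
      exact (x.norm_coe_le_norm k).trans hlt.le
    rw [he]; exact hempty
  have h0Z : (0 : ℕ →ᵇ X) ∈ Z := by
    intro ε hε
    have he : {n | ε ≤ ‖(0 : ℕ →ᵇ X) n‖} = ∅ := by
      ext n
      simp only [Set.mem_setOf_eq, Set.mem_empty_iff_false, iff_false, not_le]
      simpa using hε
    rw [he]; exact hempty
  have himg_ne : ((fun z => ‖x - z‖) '' Z).Nonempty := ⟨‖x - 0‖, 0, h0Z, rfl⟩
  have himg_bdd : BddBelow ((fun z => ‖x - z‖) '' Z) :=
    ⟨0, by rintro y ⟨z, _, rfl⟩; exact norm_nonneg _⟩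
  -- lower bound: every b ∈ S satisfies b ≤ ‖x - z‖ for z ∈ Z
  have key : ∀ z ∈ Z, ∀ b ∈ S, b ≤ ‖x - z‖ := by
    intro z hz b hb
    refine le_of_forall_pos_le_add fun ε hε => ?_
    have hnot : ¬ ({k | b < ‖x k‖} ⊆ {n | ε ≤ ‖z n‖}) := fun h => hb (hdown h (hz ε hε))
    obtain ⟨k, hk1, hk2⟩ := Set.not_subset.mp hnot
    simp only [Set.mem_setOf_eq, not_le] at hk1 hk2
    have h1 : ‖x k‖ ≤ ‖x k - z k‖ + ‖z k‖ := by
      calc ‖x k‖ = ‖(x k - z k) + z k‖ := by rw [sub_add_cancel]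
        _ ≤ ‖x k - z k‖ + ‖z k‖ := norm_add_le _ _
    have h2 : ‖x k - z k‖ ≤ ‖x - z‖ := by
      have := (x - z).norm_coe_le_norm k
      simpa using this
    linarith
  by_cases hU : Set.univ ∈ I
  · -- degenerate case: I contains everything
    have hSe : S = ∅ := by
      ext b
      simp only [hSdef, Set.mem_setOf_eq, Set.mem_empty_iff_false, iff_false, not_not]
      exact hdown (Set.subset_univ _) hU
    have hxZ : x ∈ Z := fun ε _ => hdown (Set.subset_univ _) hU
    have hle : sInf ((fun z => ‖x - z‖) '' Z) ≤ 0 := by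
      have : ‖x - x‖ = 0 := by simp
      have hm : (0:ℝ) ∈ (fun z => ‖x - z‖) '' Z := ⟨x, hxZ, this⟩
      exact csInf_le himg_bdd hm
    have hge : 0 ≤ sInf ((fun z => ‖x - z‖) '' Z) :=
      le_csInf himg_ne (by rintro y ⟨z, _, rfl⟩; exact norm_nonneg _)
    rw [hSe, Real.sSup_empty]
    linarith
  · have hSne : S.Nonempty := by
      refine ⟨-1, fun h => hU ?_⟩
      have he : {k | (-1:ℝ) < ‖x k‖} = Set.univ := by
        ext k; simp only [Set.mem_setOf_eq, Set.mem_univ, iff_true]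
        linarith [norm_nonneg (x k)]
      rwa [he] at h
    have hL0 : 0 ≤ sSup S := by
      refine le_of_forall_pos_le_add fun ε hε => ?_
      have : -(ε/2) ∈ S := by
        refine fun h => hU ?_
        have he : {k | -(ε/2) < ‖x k‖} = Set.univ := by
          ext k; simp only [Set.mem_setOf_eq, Set.mem_univ, iff_true]
          have := norm_nonneg (x k); linarith
        rwa [he] at h
      have := le_csSup hSbdd this
      linarith
    apply le_antisymm
    · -- sInf ≤ sSup S
      refine le_of_forall_pos_le_add fun ε hε => ?_
      set L := sSup S with hL
      have hA : {k | L + ε < ‖x k‖} ∈ I := by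
        by_contra hA
        have : L + ε ∈ S := hA
        have := le_csSup hSbdd this
        linarith
      set z : ℕ →ᵇ X := BoundedContinuousFunction.ofNormedAddCommGroupDiscrete
        (fun n => if L + ε < ‖x n‖ then x n else 0) ‖x‖
        (fun n => by
          split
          · exact x.norm_coe_le_norm n
          · simp [norm_nonneg]) with hzdef
      have hzZ : z ∈ Z := by
        intro δ hδ
        refine hdown (fun n hn => ?_) hA
        simp only [Set.mem_setOf_eq] at hn ⊢
        by_contra hc
        rw [hzdef] at hn
        simp only [BoundedContinuousFunction.coe_ofNormedAddCommGroupDiscrete] at hn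
        rw [if_neg hc] at hn
        simp at hn
        linarith
      have hnorm : ‖x - z‖ ≤ L + ε := by
        refine (BoundedContinuousFunction.norm_le (by linarith)).mpr fun n => ?_
        have : (x - z) n = x n - z n := by simp
        rw [this, hzdef]
        simp only [BoundedContinuousFunction.coe_ofNormedAddCommGroupDiscrete]
        split_ifs with h
        · simp only [sub_self, norm_zero]; linarith
        · simp only [sub_zero]
          push_neg at h
          exact h
      calc sInf ((fun z => ‖x - z‖) '' Z) ≤ ‖x - z‖ := csInf_le himg_bdd ⟨z, hzZ, rfl⟩
        _ ≤ L + ε := hnorm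
    · -- sSup S ≤ sInf
      refine le_csInf himg_ne ?_
      rintro y ⟨z, hz, rfl⟩
      exact csSup_le hSne (fun b hb => key z hz b hb)
end

section
/- If I is an intersection of finitely many maximal ideals on ℕ, then the quotient ℓ∞/c_{0,I} is finite-dimensional, and hence c_{0,I} is a complemented subspace of ℓ∞. -/
/-! The complements of the members of a maximal ideal `J` form an ultrafilter `p`, and
`c_{0,J}` is the kernel of the bounded functional `x ↦ p-lim x`. So for `I = J₁ ∩ ⋯ ∩ Jₘ` the
space `c_{0,I}` is the kernel of a bounded operator `ℓ∞ → ℝᵐ`: a closed subspace of finite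
codimension, hence complemented. -/

open BoundedContinuousFunction Filter Topology

namespace Ultrafilter

variable {α : Type*}

def ofMaximalIdeal (J : Set (Set α))
    (hdown : ∀ {A B : Set α}, A ⊆ B → B ∈ J → A ∈ J)
    (hunion : ∀ {A B : Set α}, A ∈ J → B ∈ J → A ∪ B ∈ J)
    (hproper : Set.univ ∉ J) (hmax : ∀ A : Set α, A ∈ J ∨ Aᶜ ∈ J) : Ultrafilter α :=
  ofComplNotMemIff
    (comk (· ∈ J) ((hmax ∅).resolve_right (by simpa using hproper))
      (fun _ ht _ hst => hdown hst ht) (fun _ hs _ ht => hunion hs ht))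
    fun s => by
      simp only [mem_comk, compl_compl]
      refine ⟨(hmax s).resolve_left, fun hsc hs => hproper ?_⟩
      simpa using hunion hs hsc

theorem mem_ofMaximalIdeal {J : Set (Set α)} {hdown hunion hproper hmax} {A : Set α} :
    A ∈ ofMaximalIdeal J hdown hunion hproper hmax ↔ Aᶜ ∈ J :=
  Iff.rfl

end Ultrafilter

theorem Real.tendsto_nhds_zero_iff_compl_setOf_le_abs_mem {α : Type*} {l : Filter α}
    {f : α → ℝ} : Tendsto f l (𝓝 0) ↔ ∀ ε > 0, {n | ε ≤ |f n|}ᶜ ∈ l := by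
  simp only [Metric.tendsto_nhds, Real.dist_0_eq_abs, Filter.Eventually, Set.compl_ofPred, not_le]

namespace BoundedContinuousFunction

variable {α : Type*} [TopologicalSpace α] (p : Ultrafilter α)

theorem exists_tendsto_ultrafilter (x : α →ᵇ ℝ) : ∃ a, Tendsto x p (𝓝 a) := by
  obtain ⟨a, -, ha⟩ := x.isBounded_range.isCompact_closure.ultrafilter_le_nhds' (p.map x)
    (mem_map.2 (univ_mem' fun n => subset_closure ⟨n, rfl⟩))
  exact ⟨a, ha⟩

theorem tendsto_limUnder_ultrafilter (x : α →ᵇ ℝ) : Tendsto x p (𝓝 (limUnder p x)) :=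
  tendsto_nhds_limUnder (x.exists_tendsto_ultrafilter p)

noncomputable def ultrafilterLim : (α →ᵇ ℝ) →L[ℝ] ℝ :=
  LinearMap.mkContinuous
    { toFun := fun x => limUnder p x
      map_add' := fun x y => tendsto_nhds_unique (tendsto_limUnder_ultrafilter p (x + y))
        ((tendsto_limUnder_ultrafilter p x).add (tendsto_limUnder_ultrafilter p y))
      map_smul' := fun c x => tendsto_nhds_unique (tendsto_limUnder_ultrafilter p (c • x))
        ((tendsto_limUnder_ultrafilter p x).const_smul c) } 1
    fun x => by
      rw [one_mul]
      exact le_of_tendsto (tendsto_limUnder_ultrafilter p x).norm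
        (Eventually.of_forall x.norm_coe_le_norm)

theorem tendsto_ultrafilterLim (x : α →ᵇ ℝ) : Tendsto x p (𝓝 (ultrafilterLim p x)) :=
  tendsto_limUnder_ultrafilter p x

theorem ultrafilterLim_eq_zero_iff {x : α →ᵇ ℝ} :
    ultrafilterLim p x = 0 ↔ Tendsto x p (𝓝 0) :=
  ⟨fun h => h ▸ tendsto_ultrafilterLim p x,
    fun h => tendsto_nhds_unique (tendsto_ultrafilterLim p x) h⟩

theorem ultrafilterLim_ofMaximalIdeal_eq_zero_iff {J : Set (Set α)} {hdown hunion hproper hmax}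
    {x : α →ᵇ ℝ} :
    ultrafilterLim (.ofMaximalIdeal J hdown hunion hproper hmax) x = 0 ↔
      ∀ ε > 0, {n | ε ≤ |x n|} ∈ J := by
  simp only [ultrafilterLim_eq_zero_iff, Real.tendsto_nhds_zero_iff_compl_setOf_le_abs_mem,
    Ultrafilter.mem_coe, Ultrafilter.mem_ofMaximalIdeal, compl_compl]

end BoundedContinuousFunction

theorem quotient_finiteDimensional_of_finite_inter_maximal_general
    (m : ℕ) (J : Fin m → Set (Set ℕ))
    (hdown : ∀ i, ∀ {A B : Set ℕ}, A ⊆ B → B ∈ J i → A ∈ J i)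
    (hunion : ∀ i, ∀ {A B : Set ℕ}, A ∈ J i → B ∈ J i → A ∪ B ∈ J i)
    (hproper : ∀ i, Set.univ ∉ J i)
    (hmax : ∀ i, ∀ A : Set ℕ, A ∈ J i ∨ Aᶜ ∈ J i)
    (N : Submodule ℝ (ℕ →ᵇ ℝ))
    (hN : (N : Set (ℕ →ᵇ ℝ)) =
      {x : ℕ →ᵇ ℝ | ∀ ε > (0 : ℝ), {n | ε ≤ |x n|} ∈ {A : Set ℕ | ∀ i, A ∈ J i}}) :
    FiniteDimensional ℝ ((ℕ →ᵇ ℝ) ⧸ N) ∧ N.ClosedComplemented := by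
  let T : (ℕ →ᵇ ℝ) →L[ℝ] (Fin m → ℝ) := ContinuousLinearMap.pi fun i =>
    ultrafilterLim (.ofMaximalIdeal (J i) (hdown i) (hunion i) (hproper i) (hmax i))
  have hNT : N = T.ker := SetLike.coe_injective <| hN.trans <| Set.ext fun x => by
    simp only [Set.mem_ofPred_eq, SetLike.mem_coe, LinearMap.mem_ker, ContinuousLinearMap.coe_coe,
      funext_iff, T, ContinuousLinearMap.pi_apply, Pi.zero_apply,
      ultrafilterLim_ofMaximalIdeal_eq_zero_iff]
    exact ⟨fun h i ε hε => h ε hε i, fun h ε hε i => h i ε hε⟩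
  subst hNT
  have : FiniteDimensional ℝ ((ℕ →ᵇ ℝ) ⧸ T.ker) :=
    (LinearMap.quotKerEquivRange T.toLinearMap).symm.finiteDimensional
  exact ⟨this, .of_finiteDimensional_quotient T.isClosed_ker⟩

/-- If `I` is an intersection of finitely many maximal ideals on `ℕ`, then the quotient
`ℓ∞ / c_{0,I}` is finite-dimensional, and hence `c_{0,I}` is complemented in `ℓ∞`. -/
theorem quotient_finiteDimensional_of_finite_inter_maximal
    (m : ℕ) (J : Fin m → Set (Set ℕ))
    (hdown : ∀ i, ∀ {A B : Set ℕ}, A ⊆ B → B ∈ J i → A ∈ J i)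
    (hunion : ∀ i, ∀ {A B : Set ℕ}, A ∈ J i → B ∈ J i → A ∪ B ∈ J i)
    (hfin : ∀ i, ∀ A : Set ℕ, A.Finite → A ∈ J i)
    (hproper : ∀ i, Set.univ ∉ J i)
    (hmax : ∀ i, ∀ A : Set ℕ, A ∈ J i ∨ Aᶜ ∈ J i)
    (N : Submodule ℝ (ℕ →ᵇ ℝ))
    (hN : (N : Set (ℕ →ᵇ ℝ)) =
      {x : ℕ →ᵇ ℝ | ∀ ε > (0 : ℝ), {n | ε ≤ |x n|} ∈ {A : Set ℕ | ∀ i, A ∈ J i}}) :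
    FiniteDimensional ℝ ((ℕ →ᵇ ℝ) ⧸ N) ∧ N.ClosedComplemented :=
  quotient_finiteDimensional_of_finite_inter_maximal_general m J hdown hunion hproper hmax N hN
end
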